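/- arXiv:1609.07271 — 6 statements merged into one kernel-verified Lean document; each statement's English description precedes it below -/
import Mathlib

section
/- Let G : ℝ × ℝ → ℝ be twice continuously differentiable in a neighbourhood of (x*, p*), with G(x*, p*) = 0 and ∂G/∂x (x*, p*) = 0. Assume ∂G/∂p (x*, p*) ≠ 0, ∂²G/∂x² (x*, p*) ≠ 0, and ∂G/∂p (x*, p*) · ∂²G/∂x² (x*, p*) < 0. Then there exist ε > 0 and δ > 0 such that for every p with p* − δ < p < p*, the equation G(x, p) = 0 has no solution x with |x − x*| < ε. -/
/-!
Suppose `G_p > 0` and `G_xx < 0` (the other case is symmetric). By the second-derivative test,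
`xs` is a local maximum of `x ↦ G (x, ps)`, so `G (x, ps) ≤ 0` near `xs`. Since `G_p` is
continuous and positive at `(xs, ps)`, the maps `p ↦ G (x, p)` for `x` near `xs` are strictly
increasing on one common interval around `ps`, hence `G (x, p) < G (x, ps) ≤ 0` for `p` slightly
below `ps`.
-/

open Metric Set Topology

theorem ContDiffAt.eventually_hasDerivAt_snd {G : ℝ × ℝ → ℝ} {z : ℝ × ℝ}
    (hG : ContDiffAt ℝ 1 G z) :
    ∀ᶠ w in 𝓝 z, HasDerivAt (fun p => G (w.1, p)) (fderiv ℝ G w (0, 1)) w.2 := by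
  filter_upwards [hG.eventually (by simp)] with w hw
  exact (hw.differentiableAt one_ne_zero).hasFDerivAt.comp_hasDerivAt w.2
    ((hasDerivAt_const _ _).prodMk (hasDerivAt_id _))

theorem ContDiffAt.exists_ball_strictMonoOn_snd {G : ℝ × ℝ → ℝ} {x₀ p₀ : ℝ}
    (hG : ContDiffAt ℝ 1 G (x₀, p₀)) (hpos : 0 < deriv (fun p => G (x₀, p)) p₀) :
    ∃ r > 0, ∀ x ∈ ball x₀ r, StrictMonoOn (fun p => G (x, p)) (ball p₀ r) := by
  have hD : ContinuousAt (fun w => fderiv ℝ G w (0, 1)) (x₀, p₀) :=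
    (hG.continuousAt_fderiv one_ne_zero).clm_apply continuousAt_const
  have hD₀ : 0 < fderiv ℝ G (x₀, p₀) (0, 1) := by
    rwa [← hG.eventually_hasDerivAt_snd.self_of_nhds.deriv]
  obtain ⟨r, hr, hball⟩ := Metric.eventually_nhds_iff_ball.mp
    (hG.eventually_hasDerivAt_snd.and (hD.eventually (lt_mem_nhds hD₀)))
  refine ⟨r, hr, fun x hx => ?_⟩
  have hslice (p) (hp : p ∈ ball p₀ r) :
      HasDerivAt (fun p => G (x, p)) (fderiv ℝ G (x, p) (0, 1)) p ∧
        0 < fderiv ℝ G (x, p) (0, 1) :=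
    hball (x, p) (ball_prod_same x₀ p₀ r ▸ mk_mem_prod hx hp)
  refine strictMonoOn_of_deriv_pos (convex_ball p₀ r)
    (fun p hp => (hslice p hp).1.continuousAt.continuousWithinAt) (fun p hp => ?_)
  rw [isOpen_ball.interior_eq] at hp
  rw [(hslice p hp).1.deriv]
  exact (hslice p hp).2

theorem ContDiffAt.exists_ball_strictAntiOn_snd {G : ℝ × ℝ → ℝ} {x₀ p₀ : ℝ}
    (hG : ContDiffAt ℝ 1 G (x₀, p₀)) (hneg : deriv (fun p => G (x₀, p)) p₀ < 0) :
    ∃ r > 0, ∀ x ∈ ball x₀ r, StrictAntiOn (fun p => G (x, p)) (ball p₀ r) := by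
  obtain ⟨r, hr, hmono⟩ := hG.neg.exists_ball_strictMonoOn_snd (by simpa [deriv.fun_neg])
  exact ⟨r, hr, fun x hx => by simpa using (hmono x hx).neg⟩

theorem exists_forall_lt_of_isLocalMax_of_strictMonoOn_snd {G : ℝ × ℝ → ℝ}
    {x₀ p₀ r : ℝ}
    (hmax : IsLocalMax (fun x => G (x, p₀)) x₀) (hr : 0 < r)
    (hmono : ∀ x ∈ ball x₀ r, StrictMonoOn (fun p => G (x, p)) (ball p₀ r)) :
    ∃ ε > (0:ℝ), ∃ δ > (0:ℝ), ∀ p : ℝ, p₀ - δ < p → p < p₀ →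
      ∀ x : ℝ, |x - x₀| < ε → G (x, p) < G (x₀, p₀) := by
  obtain ⟨ε, hε, hle⟩ := Metric.eventually_nhds_iff_ball.mp hmax
  refine ⟨min ε r, lt_min hε hr, r, hr, fun p hp₁ hp₂ x hx => ?_⟩
  rw [← Real.dist_eq, lt_min_iff] at hx
  have hp : p ∈ ball p₀ r := by rw [Real.ball_eq_Ioo]; constructor <;> linarith
  calc G (x, p) < G (x, p₀) := hmono x hx.2 hp (mem_ball_self hr) hp₂
    _ ≤ G (x₀, p₀) := hle x hx.1

theorem exists_forall_gt_of_isLocalMin_of_strictAntiOn_snd {G : ℝ × ℝ → ℝ}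
    {x₀ p₀ r : ℝ}
    (hmin : IsLocalMin (fun x => G (x, p₀)) x₀) (hr : 0 < r)
    (hanti : ∀ x ∈ ball x₀ r, StrictAntiOn (fun p => G (x, p)) (ball p₀ r)) :
    ∃ ε > (0:ℝ), ∃ δ > (0:ℝ), ∀ p : ℝ, p₀ - δ < p → p < p₀ →
      ∀ x : ℝ, |x - x₀| < ε → G (x₀, p₀) < G (x, p) := by
  simpa using exists_forall_lt_of_isLocalMax_of_strictMonoOn_snd (G := fun z => -G z)
    hmin.neg hr fun x hx => (hanti x hx).neg

theorem saddle_node_no_solutions_below_general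
    (G : ℝ × ℝ → ℝ) (xs ps : ℝ)
    (hG : ContDiffAt ℝ 2 G (xs, ps))
    (h0 : G (xs, ps) = 0)
    (hGx : deriv (fun x => G (x, ps)) xs = 0)
    (hGp : deriv (fun p => G (xs, p)) ps ≠ 0)
    (hsign : deriv (fun p => G (xs, p)) ps *
        deriv (deriv (fun x => G (x, ps))) xs < 0) :
    ∃ ε > (0:ℝ), ∃ δ > (0:ℝ), ∀ p : ℝ, ps - δ < p → p < ps →
      ∀ x : ℝ, |x - xs| < ε → G (x, p) ≠ 0 := by
  have hG₁ : ContDiffAt ℝ 1 G (xs, ps) := hG.of_le one_le_two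
  have hslice : ContinuousAt (fun x => G (x, ps)) xs :=
    hG.continuousAt.comp_of_eq (continuous_id.prodMk continuous_const).continuousAt rfl
  rcases hGp.lt_or_gt with hGp_neg | hGp_pos
  · obtain ⟨r, hr, hanti⟩ := hG₁.exists_ball_strictAntiOn_snd hGp_neg
    have hmin := isLocalMin_of_deriv_deriv_pos (pos_of_mul_neg_right hsign hGp_neg.le) hGx hslice
    obtain ⟨ε, hε, δ, hδ, hgt⟩ :=
      exists_forall_gt_of_isLocalMin_of_strictAntiOn_snd hmin hr hanti
    exact ⟨ε, hε, δ, hδ, fun p hp₁ hp₂ x hx => (h0 ▸ hgt p hp₁ hp₂ x hx).ne'⟩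
  · obtain ⟨r, hr, hmono⟩ := hG₁.exists_ball_strictMonoOn_snd hGp_pos
    have hmax := isLocalMax_of_deriv_deriv_neg (neg_of_mul_neg_right hsign hGp_pos.le) hGx hslice
    obtain ⟨ε, hε, δ, hδ, hlt⟩ :=
      exists_forall_lt_of_isLocalMax_of_strictMonoOn_snd hmax hr hmono
    exact ⟨ε, hε, δ, hδ, fun p hp₁ hp₂ x hx => (h0 ▸ hlt p hp₁ hp₂ x hx).ne⟩

/-- Saddle-node bifurcation theorem (case `G_p · G_xx < 0`): no stationary points
near `(xs, ps)` for parameters `p` below `ps`. -/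
theorem saddle_node_no_solutions_below
    (G : ℝ × ℝ → ℝ) (xs ps : ℝ)
    (hG : ContDiffAt ℝ 2 G (xs, ps))
    (h0 : G (xs, ps) = 0)
    (hGx : deriv (fun x => G (x, ps)) xs = 0)
    (hGp : deriv (fun p => G (xs, p)) ps ≠ 0)
    (hGxx : deriv (deriv (fun x => G (x, ps))) xs ≠ 0)
    (hsign : deriv (fun p => G (xs, p)) ps *
        deriv (deriv (fun x => G (x, ps))) xs < 0) :
    ∃ ε > (0:ℝ), ∃ δ > (0:ℝ), ∀ p : ℝ, ps - δ < p → p < ps →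
      ∀ x : ℝ, |x - xs| < ε → G (x, p) ≠ 0 :=
  saddle_node_no_solutions_below_general G xs ps hG h0 hGx hGp hsign
end

section
/- Let G : ℝ × ℝ → ℝ be twice continuously differentiable in a neighbourhood of (x*, p*), with G(x*, p*) = 0 and ∂G/∂x (x*, p*) = 0. Assume ∂G/∂p (x*, p*) ≠ 0, ∂²G/∂x² (x*, p*) ≠ 0, and ∂G/∂p (x*, p*) · ∂²G/∂x² (x*, p*) < 0. Then there exist ε > 0 and δ > 0 such that for every p with p* < p < p* + δ, the equation G(x, p) = 0 has exactly two solutions x with |x − x*| < ε; that is, there are x₁ < x₂ in (x* − ε, x* + ε) with G(x₁, p) = G(x₂, p) = 0 and every solution in (x* − ε, x* + ε) equals x₁ or x₂. -/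
/-!
After replacing `G` by `-G` we may assume `∂ₚG < 0 < ∂ₓ²G` at `(x*, p*)`. By continuity of
`∂ₓ²G`, all slices `x ↦ G (x, p)` with `p` near `p*` are strictly convex on one interval
`[x* - ε, x* + ε]`, and a strictly convex function has at most two zeros. At `p = p*` the slice
has a double zero at `x*`, so it is positive at `x* ± ε`, and this persists for `p` near `p*`;
since `∂ₚG < 0`, `G (x*, p) < 0` for `p` slightly above `p*`. The intermediate value theorem
gives one zero on each side of `x*`.
-/

open Set Filter Topology Metric

def HasExactlyTwoZerosIn (f : ℝ → ℝ) (s : Set ℝ) : Prop :=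
  ∃ x₁ x₂ : ℝ, x₁ < x₂ ∧ x₁ ∈ s ∧ x₂ ∈ s ∧ f x₁ = 0 ∧ f x₂ = 0 ∧
    ∀ x ∈ s, f x = 0 → x = x₁ ∨ x = x₂

lemma hasExactlyTwoZerosIn_neg_iff {f : ℝ → ℝ} {s : Set ℝ} :
    HasExactlyTwoZerosIn (fun x => -f x) s ↔ HasExactlyTwoZerosIn f s := by
  simp only [HasExactlyTwoZerosIn, neg_eq_zero]

lemma HasDerivAt.eventually_nhdsGT_lt {g : ℝ → ℝ} {g' c : ℝ} (hg : HasDerivAt g g' c)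
    (hg' : g' < 0) : ∀ᶠ p in 𝓝[>] c, g p < g c := by
  filter_upwards [hg.hasDerivWithinAt.limsup_slope_le' (lt_irrefl c) hg', self_mem_nhdsWithin]
    with p hslope hp
  exact (slope_neg_iff_of_le (le_of_lt hp)).1 hslope

namespace StrictConvexOn

variable {S : Set ℝ} {f : ℝ → ℝ}

lemma lt_of_hasDerivAt_zero (hf : StrictConvexOn ℝ S f) {c y : ℝ} (hc : c ∈ S) (hy : y ∈ S)
    (hyc : y ≠ c) (hf' : HasDerivAt f 0 c) : f c < f y := by
  rcases hyc.lt_or_gt with hlt | hgt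
  · exact (slope_neg_iff_of_le hlt.le).1 (hf.slope_lt_of_hasDerivAt hy hc hlt hf')
  · exact (slope_pos_iff_of_le hgt.le).1 (hf.lt_slope_of_hasDerivAt hc hy hgt hf')

lemma apply_ne_zero_of_mem_Ioo (hf : StrictConvexOn ℝ S f) {u v w : ℝ} (hu : u ∈ S)
    (hw : w ∈ S) (hv : v ∈ Ioo u w) (hfu : f u = 0) (hfw : f w = 0) : f v ≠ 0 := by
  have huw : u < w := hv.1.trans hv.2
  have := hf.lt_on_openSegment hu hw huw.ne (by rwa [openSegment_eq_Ioo huw])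
  rw [hfu, hfw, max_self] at this
  exact this.ne

lemma eq_or_eq_of_apply_eq_zero (hf : StrictConvexOn ℝ S f) {x₁ x₂ x : ℝ} (hx₁ : x₁ ∈ S)
    (hx₂ : x₂ ∈ S) (hx : x ∈ S) (h₁₂ : x₁ < x₂) (hf₁ : f x₁ = 0) (hf₂ : f x₂ = 0)
    (hfx : f x = 0) : x = x₁ ∨ x = x₂ := by
  rcases lt_trichotomy x x₁ with h₁ | rfl | h₁
  · exact absurd hf₁ <| hf.apply_ne_zero_of_mem_Ioo hx hx₂ ⟨h₁, h₁₂⟩ hfx hf₂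
  · exact Or.inl rfl
  rcases lt_trichotomy x x₂ with h₂ | rfl | h₂
  · exact absurd hfx <| hf.apply_ne_zero_of_mem_Ioo hx₁ hx₂ ⟨h₁, h₂⟩ hf₁ hf₂
  · exact Or.inr rfl
  · exact absurd hf₂ <| hf.apply_ne_zero_of_mem_Ioo hx₁ hx ⟨h₁₂, h₂⟩ hf₁ hfx

lemma hasExactlyTwoZerosIn_Ioo {a b c : ℝ} (hf : StrictConvexOn ℝ (Icc a b) f)
    (hfc : ContinuousOn f (Icc a b)) (hc : c ∈ Icc a b) (ha : 0 < f a) (hb : 0 < f b)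
    (hfc0 : f c < 0) : HasExactlyTwoZerosIn f (Ioo a b) := by
  obtain ⟨x₁, ⟨hax₁, hx₁c⟩, hx₁⟩ :=
    intermediate_value_Ioo' hc.1 (hfc.mono (Icc_subset_Icc_right hc.2)) ⟨hfc0, ha⟩
  obtain ⟨x₂, ⟨hcx₂, hx₂b⟩, hx₂⟩ :=
    intermediate_value_Ioo hc.2 (hfc.mono (Icc_subset_Icc_left hc.1)) ⟨hfc0, hb⟩
  have hx₁' : x₁ ∈ Ioo a b := ⟨hax₁, hx₁c.trans_le hc.2⟩
  have hx₂' : x₂ ∈ Ioo a b := ⟨hc.1.trans_lt hcx₂, hx₂b⟩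
  refine ⟨x₁, x₂, hx₁c.trans hcx₂, hx₁', hx₂', hx₁, hx₂, fun x hx hfx => ?_⟩
  exact hf.eq_or_eq_of_apply_eq_zero (Ioo_subset_Icc_self hx₁') (Ioo_subset_Icc_self hx₂')
    (Ioo_subset_Icc_self hx) (hx₁c.trans hcx₂) hx₁ hx₂ hfx

end StrictConvexOn

section PartialFst

variable {E F : Type*} [NormedAddCommGroup F] [NormedSpace ℝ F]

/-- Defined through `deriv` of the slice, so that `partialFst (partialFst G) (x, p)` is
definitionally `deriv (deriv fun x => G (x, p)) x`. -/
noncomputable def partialFst (G : ℝ × E → F) (q : ℝ × E) : F :=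
  deriv (fun x => G (x, q.2)) q.1

lemma partialFst_neg (G : ℝ × E → F) : partialFst (-G) = -partialFst G :=
  funext fun _ => deriv.neg

lemma HasFDerivAt.hasDerivAt_comp_prodMk_left [NormedAddCommGroup E] [NormedSpace ℝ E]
    {G : ℝ × E → F} {L : ℝ × E →L[ℝ] F} {x : ℝ} {p : E}
    (h : HasFDerivAt G L (x, p)) : HasDerivAt (fun x' => G (x', p)) (L (1, 0)) x :=
  h.comp_hasDerivAt x ((hasDerivAt_id x).prodMk (hasDerivAt_const x p))

lemma ContDiffAt.partialFst [NormedAddCommGroup E] [NormedSpace ℝ E] {G : ℝ × E → F}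
    {q : ℝ × E} {n : WithTop ℕ∞} {m : ℕ}
    (h : ContDiffAt ℝ n G q) (hmn : m + 1 ≤ n) : ContDiffAt ℝ m (partialFst G) q := by
  obtain ⟨G', ⟨u, hu, hG'⟩, hG'm⟩ := contDiffAt_succ_iff_hasFDerivAt.1 (h.of_le hmn)
  refine (hG'm.clm_apply (contDiffAt_const (c := ((1 : ℝ), (0 : E))))).congr_of_eventuallyEq ?_
  filter_upwards [hu] with q' hq'
  exact (hG' q' hq').hasDerivAt_comp_prodMk_left.deriv

end PartialFst

lemma exists_strictConvexOn_slices {E : Type*} [NormedAddCommGroup E] [NormedSpace ℝ E]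
    {G : ℝ × E → ℝ} {xs : ℝ} {ps : E} (hG : ContDiffAt ℝ 2 G (xs, ps))
    (hGxx : 0 < partialFst (partialFst G) (xs, ps)) :
    ∃ ε > (0:ℝ), (∀ p ∈ closedBall ps ε, ∀ x ∈ Icc (xs - ε) (xs + ε), ContinuousAt G (x, p)) ∧
      ∀ p ∈ closedBall ps ε, StrictConvexOn ℝ (Icc (xs - ε) (xs + ε)) (fun x => G (x, p)) := by
  have hGxx_cont : ContinuousAt (partialFst (partialFst G)) (xs, ps) :=
    ((hG.partialFst (m := 1) le_rfl).partialFst (m := 0) le_rfl).continuousAt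
  obtain ⟨ε, hε, hball⟩ := nhds_basis_closedBall.eventually_iff.1 <|
    ((hG.eventually (by simp)).mono fun q hq => hq.continuousAt).and
      (hGxx_cont.eventually (lt_mem_nhds hGxx))
  have hbox : ∀ p ∈ closedBall ps ε, ∀ x ∈ Icc (xs - ε) (xs + ε),
      ContinuousAt G (x, p) ∧ 0 < partialFst (partialFst G) (x, p) := fun p hp x hx =>
    hball (closedBall_prod_same xs ps ε ▸ mk_mem_prod (Real.closedBall_eq_Icc ▸ hx) hp)
  refine ⟨ε, hε, fun p hp x hx => (hbox p hp x hx).1, fun p hp => ?_⟩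
  refine strictConvexOn_of_deriv2_pos' (convex_Icc _ _) (fun x hx => ?_)
    fun x hx => (hbox p hp x hx).2
  exact ((hbox p hp x hx).1.comp (f := fun x' => (x', p)) (by fun_prop)).continuousWithinAt

theorem saddle_node_of_partialFst_partialFst_pos (G : ℝ × ℝ → ℝ) (xs ps : ℝ)
    (hG : ContDiffAt ℝ 2 G (xs, ps)) (h0 : G (xs, ps) = 0) (hGx : partialFst G (xs, ps) = 0)
    (hGp : deriv (fun p => G (xs, p)) ps < 0) (hGxx : 0 < partialFst (partialFst G) (xs, ps)) :
    ∃ ε > (0:ℝ), ∃ δ > (0:ℝ), ∀ p : ℝ, ps < p → p < ps + δ →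
      HasExactlyTwoZerosIn (fun x => G (x, p)) (Ioo (xs - ε) (xs + ε)) := by
  obtain ⟨ε, hε, hcont, hconv⟩ := exists_strictConvexOn_slices hG hGxx
  have hps : ps ∈ closedBall ps ε := mem_closedBall_self hε.le
  have hxs : xs ∈ Icc (xs - ε) (xs + ε) := ⟨by linarith, by linarith⟩
  have hcrit : HasDerivAt (fun x => G (x, ps)) 0 xs := by
    rw [← hGx]
    exact (hG.differentiableAt (by simp)).hasFDerivAt.hasDerivAt_comp_prodMk_left
      |>.differentiableAt.hasDerivAt
  have hend : ∀ y ∈ Icc (xs - ε) (xs + ε), y ≠ xs → ∀ᶠ p in 𝓝 ps, 0 < G (y, p) := by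
    intro y hy hyxs
    have hpos : 0 < G (y, ps) := h0 ▸ (hconv ps hps).lt_of_hasDerivAt_zero hxs hy hyxs hcrit
    exact ((hcont ps hps y hy).comp (f := fun p => (y, p)) (by fun_prop)).eventually
      (lt_mem_nhds hpos)
  have hmid : ∀ᶠ p in 𝓝[>] ps, G (xs, p) < 0 := by
    simpa only [h0] using
      (differentiableAt_of_deriv_ne_zero hGp.ne).hasDerivAt.eventually_nhdsGT_lt hGp
  have hev : ∀ᶠ p in 𝓝[>] ps,
      p ∈ closedBall ps ε ∧ 0 < G (xs - ε, p) ∧ 0 < G (xs + ε, p) ∧ G (xs, p) < 0 := by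
    filter_upwards [mem_nhdsWithin_of_mem_nhds (closedBall_mem_nhds ps hε),
      nhdsWithin_le_nhds (hend _ ⟨le_rfl, by linarith⟩ (by linarith)),
      nhdsWithin_le_nhds (hend _ ⟨by linarith, le_rfl⟩ (by linarith)), hmid]
      with p hp ha hb hm using ⟨hp, ha, hb, hm⟩
  obtain ⟨v, hv, hsub⟩ := mem_nhdsGT_iff_exists_Ioo_subset.1 hev
  refine ⟨ε, hε, v - ps, sub_pos.2 hv, fun p hp hpv => ?_⟩
  obtain ⟨hp, ha, hb, hm⟩ := hsub ⟨hp, by linarith⟩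
  refine (hconv p hp).hasExactlyTwoZerosIn_Ioo (fun x hx => ?_) hxs ha hb hm
  exact ((hcont p hp x hx).comp (f := fun x' => (x', p)) (by fun_prop)).continuousWithinAt

theorem saddle_node_two_solutions_above_general
    (G : ℝ × ℝ → ℝ) (xs ps : ℝ)
    (hG : ContDiffAt ℝ 2 G (xs, ps))
    (h0 : G (xs, ps) = 0)
    (hGx : deriv (fun x => G (x, ps)) xs = 0)
    (hsign : deriv (fun p => G (xs, p)) ps *
        deriv (deriv (fun x => G (x, ps))) xs < 0) :
    ∃ ε > (0:ℝ), ∃ δ > (0:ℝ), ∀ p : ℝ, ps < p → p < ps + δ →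
      ∃ x₁ x₂ : ℝ, x₁ < x₂ ∧
        x₁ ∈ Set.Ioo (xs - ε) (xs + ε) ∧ x₂ ∈ Set.Ioo (xs - ε) (xs + ε) ∧
        G (x₁, p) = 0 ∧ G (x₂, p) = 0 ∧
        ∀ x ∈ Set.Ioo (xs - ε) (xs + ε), G (x, p) = 0 → x = x₁ ∨ x = x₂ := by
  rcases mul_neg_iff.1 hsign with ⟨hGp, hGxx⟩ | ⟨hGp, hGxx⟩
  · obtain ⟨ε, hε, δ, hδ, H⟩ := saddle_node_of_partialFst_partialFst_pos (-G) xs ps hG.neg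
      (by simp [h0]) (by rw [partialFst_neg, Pi.neg_apply, neg_eq_zero]; exact hGx)
      (by simpa [deriv.neg] using hGp)
      (by rw [partialFst_neg, partialFst_neg, Pi.neg_apply, neg_pos]; exact hGxx)
    exact ⟨ε, hε, δ, hδ, fun p hp hpδ => hasExactlyTwoZerosIn_neg_iff.1 (H p hp hpδ)⟩
  · exact saddle_node_of_partialFst_partialFst_pos G xs ps hG h0 hGx hGp hGxx

/-- Saddle-node bifurcation theorem (case `G_p · G_xx < 0`): exactly two stationary
points near `(xs, ps)` for parameters `p` above `ps`. -/
theorem saddle_node_two_solutions_above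
    (G : ℝ × ℝ → ℝ) (xs ps : ℝ)
    (hG : ContDiffAt ℝ 2 G (xs, ps))
    (h0 : G (xs, ps) = 0)
    (hGx : deriv (fun x => G (x, ps)) xs = 0)
    (hGp : deriv (fun p => G (xs, p)) ps ≠ 0)
    (hGxx : deriv (deriv (fun x => G (x, ps))) xs ≠ 0)
    (hsign : deriv (fun p => G (xs, p)) ps *
        deriv (deriv (fun x => G (x, ps))) xs < 0) :
    ∃ ε > (0:ℝ), ∃ δ > (0:ℝ), ∀ p : ℝ, ps < p → p < ps + δ →
      ∃ x₁ x₂ : ℝ, x₁ < x₂ ∧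
        x₁ ∈ Set.Ioo (xs - ε) (xs + ε) ∧ x₂ ∈ Set.Ioo (xs - ε) (xs + ε) ∧
        G (x₁, p) = 0 ∧ G (x₂, p) = 0 ∧
        ∀ x ∈ Set.Ioo (xs - ε) (xs + ε), G (x, p) = 0 → x = x₁ ∨ x = x₂ :=
  saddle_node_two_solutions_above_general G xs ps hG h0 hGx hsign
end

section
/- Let a < b be real numbers, D > 0, and U : ℝ → ℝ twice continuously differentiable on [a, b], and set f = −U'. If P : ℝ → ℝ is twice continuously differentiable on [a, b], satisfies the stationary Fokker-Planck equation 0 = D P''(x) − (f(x) P(x))' for all x ∈ [a, b], and satisfies the Dirichlet boundary conditions P(a) = P(b) = 0, then P(x) = 0 for all x ∈ [a, b]. -/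
/-- On a bounded interval `[a, b]` with Dirichlet boundary conditions, the only
solution of the stationary Fokker-Planck equation `0 = D P'' − (f P)'` with
potential drift `f = −U'` is `P ≡ 0`. -/

theorem stationary_fokker_planck_dirichlet_trivial
    (a b D : ℝ) (hab : a < b) (hD : 0 < D)
    (U P f : ℝ → ℝ)
    (hU : ContDiffOn ℝ 2 U (Set.Icc a b))
    (hf : ∀ x, f x = -deriv U x)
    (hP : ContDiffOn ℝ 2 P (Set.Icc a b))
    (heq : ∀ x ∈ Set.Icc a b,
      0 = D * deriv (deriv P) x - deriv (fun y => f y * P y) x)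
    (ha : P a = 0) (hb : P b = 0) :
    ∀ x ∈ Set.Icc a b, P x = 0 := by
  have hsub : Set.Ioo a b ⊆ Set.Icc a b := Set.Ioo_subset_Icc_self
  have hP' : ContDiffOn ℝ 2 P (Set.Ioo a b) := hP.mono hsub
  have hU' : ContDiffOn ℝ 2 U (Set.Ioo a b) := hU.mono hsub
  have h12 : (1 : WithTop ℕ∞) + 1 ≤ 2 := by norm_num
  have hdP : ContDiffOn ℝ 1 (deriv P) (Set.Ioo a b) :=
    hP'.deriv_of_isOpen isOpen_Ioo h12
  have hdU : ContDiffOn ℝ 1 (deriv U) (Set.Ioo a b) :=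
    hU'.deriv_of_isOpen isOpen_Ioo h12
  -- pointwise differentiability facts on the open interval
  have hPd : ∀ x ∈ Set.Ioo a b, DifferentiableAt ℝ P x := fun x hx =>
    (hP'.differentiableOn (by norm_num)).differentiableAt (isOpen_Ioo.mem_nhds hx)
  have hUd : ∀ x ∈ Set.Ioo a b, DifferentiableAt ℝ U x := fun x hx =>
    (hU'.differentiableOn (by norm_num)).differentiableAt (isOpen_Ioo.mem_nhds hx)
  have hPd2 : ∀ x ∈ Set.Ioo a b, DifferentiableAt ℝ (deriv P) x := fun x hx =>
    (hdP.differentiableOn (by norm_num)).differentiableAt (isOpen_Ioo.mem_nhds hx)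
  have hUd2 : ∀ x ∈ Set.Ioo a b, DifferentiableAt ℝ (deriv U) x := fun x hx =>
    (hdU.differentiableOn (by norm_num)).differentiableAt (isOpen_Ioo.mem_nhds hx)
  -- the flux-like quantity q = D P' + U' P
  set q : ℝ → ℝ := fun x => D * deriv P x + deriv U x * P x with hq_def
  have hfP : (fun y => f y * P y) = fun y => -(deriv U y * P y) := by
    funext y; rw [hf y]; ring
  have hq' : ∀ x ∈ Set.Ioo a b, HasDerivAt q 0 x := by
    intro x hx
    have hA : HasDerivAt (fun y => deriv U y * P y)
        (deriv (deriv U) x * P x + deriv U x * deriv P x) x :=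
      ((hUd2 x hx).hasDerivAt).mul ((hPd x hx).hasDerivAt)
    have hB : HasDerivAt q
        (D * deriv (deriv P) x + (deriv (deriv U) x * P x + deriv U x * deriv P x)) x := by
      exact (((hPd2 x hx).hasDerivAt).const_mul D).add hA
    have hderivfP : deriv (fun y => f y * P y) x
        = -(deriv (deriv U) x * P x + deriv U x * deriv P x) := by
      rw [hfP]
      exact (hA.neg).deriv
    have he := heq x (hsub hx)
    rw [hderivfP] at he
    have : D * deriv (deriv P) x + (deriv (deriv U) x * P x + deriv U x * deriv P x) = 0 := by
      linarith
    rwa [this] at hB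
  -- q is constant on the open interval
  have hqc : ContinuousOn q (Set.Ioo a b) := fun x hx =>
    ((hq' x hx).differentiableAt).continuousAt.continuousWithinAt
  have hmono : MonotoneOn q (Set.Ioo a b) := by
    apply monotoneOn_of_deriv_nonneg (convex_Ioo a b) hqc
    · intro x hx
      rw [interior_Ioo] at hx
      exact ((hq' x hx).differentiableAt).differentiableWithinAt
    · intro x hx
      rw [interior_Ioo] at hx
      rw [(hq' x hx).deriv]
  have hanti : AntitoneOn q (Set.Ioo a b) := by
    apply antitoneOn_of_deriv_nonpos (convex_Ioo a b) hqc
    · intro x hx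
      rw [interior_Ioo] at hx
      exact ((hq' x hx).differentiableAt).differentiableWithinAt
    · intro x hx
      rw [interior_Ioo] at hx
      rw [(hq' x hx).deriv]
  set x0 : ℝ := (a + b) / 2 with hx0_def
  have hx0 : x0 ∈ Set.Ioo a b := by constructor <;> [linarith; linarith]
  set J : ℝ := q x0 with hJ_def
  have hqconst : ∀ x ∈ Set.Ioo a b, q x = J := by
    intro x hx
    rcases le_total x x0 with h | h
    · exact le_antisymm (hmono hx hx0 h) (hanti hx hx0 h)
    · exact le_antisymm (hanti hx0 hx h) (hmono hx0 hx h)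
  -- the transformed function h = P * exp (U / D)
  set g : ℝ → ℝ := fun x => P x * Real.exp (U x / D) with hg_def
  have hgcont : ContinuousOn g (Set.Icc a b) := by
    apply (hP.continuousOn).mul
    exact Real.continuous_exp.comp_continuousOn ((hU.continuousOn).div_const D)
  have hg' : ∀ x ∈ Set.Ioo a b, HasDerivAt g (Real.exp (U x / D) / D * J) x := by
    intro x hx
    have he : HasDerivAt (fun y => Real.exp (U y / D))
        (Real.exp (U x / D) * (deriv U x / D)) x := by
      have : HasDerivAt (fun y => U y / D) (deriv U x / D) x :=
        ((hUd x hx).hasDerivAt).div_const D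
      exact (Real.hasDerivAt_exp (U x / D)).comp x this
    have hmul : HasDerivAt g
        (deriv P x * Real.exp (U x / D) + P x * (Real.exp (U x / D) * (deriv U x / D))) x :=
      ((hPd x hx).hasDerivAt).mul he
    have : deriv P x * Real.exp (U x / D) + P x * (Real.exp (U x / D) * (deriv U x / D))
        = Real.exp (U x / D) / D * J := by
      rw [← hqconst x hx, hq_def]
      field_simp
    rwa [this] at hmul
  have hga : g a = 0 := by simp [hg_def, ha]
  have hgb : g b = 0 := by simp [hg_def, hb]
  -- g vanishes identically
  have hgzero : ∀ x ∈ Set.Icc a b, g x = 0 := by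
    rcases lt_trichotomy J 0 with hJ | hJ | hJ
    · exfalso
      have : StrictAntiOn g (Set.Icc a b) := by
        apply strictAntiOn_of_deriv_neg (convex_Icc a b) hgcont
        intro x hx
        rw [interior_Icc] at hx
        rw [(hg' x hx).deriv]
        exact mul_neg_of_pos_of_neg (div_pos (Real.exp_pos _) hD) hJ
      have := this (Set.left_mem_Icc.2 hab.le) (Set.right_mem_Icc.2 hab.le) hab
      rw [hga, hgb] at this; exact lt_irrefl 0 this
    · intro x hx
      have hmono' : MonotoneOn g (Set.Icc a b) := by
        apply monotoneOn_of_deriv_nonneg (convex_Icc a b) hgcont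
        · intro y hy
          rw [interior_Icc] at hy
          exact ((hg' y hy).differentiableAt).differentiableWithinAt
        · intro y hy
          rw [interior_Icc] at hy
          rw [(hg' y hy).deriv, hJ, mul_zero]
      have hanti' : AntitoneOn g (Set.Icc a b) := by
        apply antitoneOn_of_deriv_nonpos (convex_Icc a b) hgcont
        · intro y hy
          rw [interior_Icc] at hy
          exact ((hg' y hy).differentiableAt).differentiableWithinAt
        · intro y hy
          rw [interior_Icc] at hy
          rw [(hg' y hy).deriv, hJ, mul_zero]
      have h1 : g a ≤ g x := hmono' (Set.left_mem_Icc.2 hab.le) hx hx.1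
      have h2 : g x ≤ g a := hanti' (Set.left_mem_Icc.2 hab.le) hx hx.1
      rw [hga] at h1 h2
      linarith
    · exfalso
      have : StrictMonoOn g (Set.Icc a b) := by
        apply strictMonoOn_of_deriv_pos (convex_Icc a b) hgcont
        intro x hx
        rw [interior_Icc] at hx
        rw [(hg' x hx).deriv]
        exact mul_pos (div_pos (Real.exp_pos _) hD) hJ
      have := this (Set.left_mem_Icc.2 hab.le) (Set.right_mem_Icc.2 hab.le) hab
      rw [hga, hgb] at this; exact lt_irrefl 0 this
  intro x hx
  have := hgzero x hx
  rw [hg_def] at this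
  have hexp : Real.exp (U x / D) ≠ 0 := (Real.exp_pos _).ne'
  exact (mul_eq_zero.1 this).resolve_right hexp
end

section
/- Let a < b be real numbers, D > 0, f : ℝ → ℝ continuously differentiable on [a, b], and suppose v : ℝ → ℝ is twice continuously differentiable on [a, b], satisfies v(a) = v(b) = 0, v(x) ≥ 0 for all x ∈ [a, b], ∫ₐᵇ v(x) dx > 0, and γ v(x) = (D v'(x) − f(x) v(x))' for all x ∈ [a, b]. Then γ ≤ 0. -/
/-!
Integrating the eigenvalue equation over `[a, b]` gives `γ ∫ v = J(b) - J(a)` for the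
probability flux `J = D v' - f v`. At the endpoints `v` vanishes, so `J = D v'` there, and
since `v ≥ 0` attains its minimum `0` at both endpoints, `v'(a) ≥ 0 ≥ v'(b)`. Hence
`γ ∫ v ≤ 0`, and positivity of the mass gives `γ ≤ 0`.
-/

open Set Topology MeasureTheory intervalIntegral

theorem IsMinOn.hasDerivWithinAt_mul_sub_nonneg {v : ℝ → ℝ} {s : Set ℝ} {x y d : ℝ}
    (hs : Convex ℝ s) (hmin : IsMinOn v s x) (hd : HasDerivWithinAt v d s x)
    (hx : x ∈ s) (hy : y ∈ s) : 0 ≤ d * (y - x) := by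
  have hcone : y - x ∈ posTangentConeAt s x :=
    sub_mem_posTangentConeAt_of_segment_subset (hs.segment_subset hx hy)
  simpa [mul_comm] using hmin.localize.hasFDerivWithinAt_nonneg hd.hasFDerivWithinAt hcone

/-- The flux `D v' - f v`; `derivWithin` makes its endpoint values depend on `v` on `s` only. -/
noncomputable def probabilityFlux (D : ℝ) (f v : ℝ → ℝ) (s : Set ℝ) (x : ℝ) : ℝ :=
  D * derivWithin v s x - f x * v x

theorem continuousOn_probabilityFlux {a b D : ℝ} {f v : ℝ → ℝ} (hab : a < b)
    (hf : ContinuousOn f (Icc a b)) (hv : ContDiffOn ℝ 2 v (Icc a b)) :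
    ContinuousOn (probabilityFlux D f v (Icc a b)) (Icc a b) :=
  (continuousOn_const.mul
    (hv.derivWithin (m := 1) (uniqueDiffOn_Icc hab) (by norm_num)).continuousOn).sub
    (hf.mul hv.continuousOn)

theorem derivWithin_Icc_eventuallyEq_deriv {a b x : ℝ} (v : ℝ → ℝ) (hx : x ∈ Ioo a b) :
    derivWithin v (Icc a b) =ᶠ[𝓝 x] deriv v := by
  filter_upwards [Ioo_mem_nhds hx.1 hx.2] with y hy
  exact derivWithin_of_mem_nhds (Icc_mem_nhds hy.1 hy.2)

theorem hasDerivAt_probabilityFlux {a b D x : ℝ} {f v : ℝ → ℝ} (hab : a < b)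
    (hf : ContDiffOn ℝ 1 f (Icc a b)) (hv : ContDiffOn ℝ 2 v (Icc a b)) (hx : x ∈ Ioo a b) :
    HasDerivAt (probabilityFlux D f v (Icc a b))
      (deriv (fun y => D * deriv v y - f y * v y) x) x := by
  have hIcc : Icc a b ∈ 𝓝 x := Icc_mem_nhds hx.1 hx.2
  have hv' : DifferentiableAt ℝ (derivWithin v (Icc a b)) x :=
    ((hv.derivWithin (m := 1) (uniqueDiffOn_Icc hab) (by norm_num)).differentiableOn one_ne_zero x
      (Ioo_subset_Icc_self hx)).differentiableAt hIcc
  have hflux : probabilityFlux D f v (Icc a b) =ᶠ[𝓝 x] fun y => D * deriv v y - f y * v y := by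
    filter_upwards [derivWithin_Icc_eventuallyEq_deriv v hx] with y hy
    rw [probabilityFlux, hy]
  refine (DifferentiableAt.hasDerivAt ?_).congr_of_eventuallyEq hflux
  exact ((differentiableAt_const D).mul
      (hv'.congr_of_eventuallyEq (derivWithin_Icc_eventuallyEq_deriv v hx).symm)).sub
    (((hf.differentiableOn one_ne_zero x (Ioo_subset_Icc_self hx)).differentiableAt hIcc).mul
      ((hv.differentiableOn (by norm_num) x (Ioo_subset_Icc_self hx)).differentiableAt hIcc))

/-- A nonnegative Dirichlet eigenfunction of the Fokker-Planck operator on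
`[a, b]` with positive total mass has eigenvalue `γ ≤ 0`. -/
theorem fokker_planck_leading_eigenvalue_nonpos
    (a b D γ : ℝ) (hab : a < b) (hD : 0 < D)
    (f v : ℝ → ℝ)
    (hf : ContDiffOn ℝ 1 f (Set.Icc a b))
    (hv : ContDiffOn ℝ 2 v (Set.Icc a b))
    (hva : v a = 0) (hvb : v b = 0)
    (hpos : ∀ x ∈ Set.Icc a b, 0 ≤ v x)
    (hmass : 0 < ∫ x in a..b, v x)
    (heig : ∀ x ∈ Set.Icc a b,
      γ * v x = deriv (fun y => D * deriv v y - f y * v y) x) :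
    γ ≤ 0 := by
  set J := probabilityFlux D f v (Icc a b)
  set v' := derivWithin v (Icc a b)
  have ha : a ∈ Icc a b := left_mem_Icc.2 hab.le
  have hb : b ∈ Icc a b := right_mem_Icc.2 hab.le
  have hγv : IntervalIntegrable (fun x => γ * v x) volume a b :=
    (continuousOn_const.mul hv.continuousOn).intervalIntegrable_of_Icc hab.le
  have hFTC : ∫ x in a..b, γ * v x = J b - J a :=
    integral_eq_sub_of_hasDerivAt_of_le hab.le (continuousOn_probabilityFlux hab hf.continuousOn hv)
      (fun x hx => heig x (Ioo_subset_Icc_self hx) ▸ hasDerivAt_probabilityFlux hab hf hv hx) hγv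
  have hmin_a : IsMinOn v (Icc a b) a := fun x hx => hva ▸ hpos x hx
  have hmin_b : IsMinOn v (Icc a b) b := fun x hx => hvb ▸ hpos x hx
  have hv_diff : DifferentiableOn ℝ v (Icc a b) := hv.differentiableOn (by norm_num)
  have hv'a : 0 ≤ v' a * (b - a) := hmin_a.hasDerivWithinAt_mul_sub_nonneg (convex_Icc a b)
    (hv_diff a ha).hasDerivWithinAt ha hb
  have hv'b : 0 ≤ v' b * (a - b) := hmin_b.hasDerivWithinAt_mul_sub_nonneg (convex_Icc a b)
    (hv_diff b hb).hasDerivWithinAt hb ha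
  have hflux : γ * ∫ x in a..b, v x = D * (v' b - v' a) := by
    rw [← intervalIntegral.integral_const_mul, hFTC]
    simp only [J, probabilityFlux, hva, hvb]
    ring
  refine nonpos_of_mul_nonpos_left (hflux ▸ ?_) hmass
  exact mul_nonpos_of_nonneg_of_nonpos hD.le (by nlinarith)
end

section
/- Let a < b be real numbers, D > 0, and U : ℝ → ℝ twice continuously differentiable on [a, b], and set f = −U'. Suppose v : ℝ → ℝ is twice continuously differentiable on [a, b], satisfies v(a) = v(b) = 0, v(x) ≥ 0 for all x ∈ [a, b], ∫ₐᵇ v(x) dx > 0, and γ v(x) = (D v'(x) − f(x) v(x))' for all x ∈ [a, b]. Then γ < 0 (strictly). -/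
/-!
Integrating the eigenvalue equation gives `γ ∫ v = J b - J a` for the flux `J = D v' - f v`.
Since `v ≥ 0` vanishes at both endpoints, `v' a ≥ 0 ≥ v' b`, so `J a ≥ 0 ≥ J b` and `γ ≤ 0`.
If `γ = 0`, then `J` is constant, hence zero, so `v` solves the linear equation
`D v' = -U' v` with `v a = 0`, and Grönwall's inequality forces `v = 0`, contradicting
`∫ v > 0`.
-/

open Set Filter Topology

theorem fderivWithin_apply_eq_mul_derivWithin (v : ℝ → ℝ) (s : Set ℝ) (x y : ℝ) :
    fderivWithin ℝ v s x y = y * derivWithin v s x := by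
  simpa [derivWithin] using (fderivWithin ℝ v s x).map_smul y 1

theorem IsMinOn.derivWithin_Icc_left_nonneg {v : ℝ → ℝ} {a b : ℝ} (hab : a < b)
    (h : IsMinOn v (Icc a b) a) : 0 ≤ derivWithin v (Icc a b) a := by
  have hcone : b - a ∈ posTangentConeAt (Icc a b) a :=
    sub_mem_posTangentConeAt_of_segment_subset
      ((convex_Icc a b).segment_subset (left_mem_Icc.2 hab.le) (right_mem_Icc.2 hab.le))
  have := h.localize.fderivWithin_nonneg hcone
  rw [fderivWithin_apply_eq_mul_derivWithin] at this
  exact nonneg_of_mul_nonneg_right this (sub_pos.2 hab)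

theorem IsMinOn.derivWithin_Icc_right_nonpos {v : ℝ → ℝ} {a b : ℝ} (hab : a < b)
    (h : IsMinOn v (Icc a b) b) : derivWithin v (Icc a b) b ≤ 0 := by
  have hcone : a - b ∈ posTangentConeAt (Icc a b) b :=
    sub_mem_posTangentConeAt_of_segment_subset
      ((convex_Icc a b).segment_subset (right_mem_Icc.2 hab.le) (left_mem_Icc.2 hab.le))
  have := h.localize.fderivWithin_nonneg hcone
  rw [fderivWithin_apply_eq_mul_derivWithin] at this
  nlinarith

theorem eqOn_zero_of_hasDerivWithinAt_mul_self {v p : ℝ → ℝ} {a b : ℝ}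
    (hp : ContinuousOn p (Icc a b))
    (hv : ∀ x ∈ Icc a b, HasDerivWithinAt v (p x * v x) (Icc a b) x) (ha : v a = 0) :
    EqOn v 0 (Icc a b) := by
  obtain ⟨C, hC⟩ := isCompact_Icc.exists_bound_of_continuousOn hp
  have hright : ∀ x ∈ Ico a b, HasDerivWithinAt v (p x * v x) (Ici x) x := fun x hx =>
    (hv x (Ico_subset_Icc_self hx)).mono_of_mem_nhdsWithin (Icc_mem_nhdsGE_of_mem hx)
  have hbound : ∀ x ∈ Ico a b, ‖p x * v x‖ ≤ C * ‖v x‖ + 0 := fun x hx => by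
    rw [norm_mul, add_zero]
    exact mul_le_mul_of_nonneg_right (hC x (Ico_subset_Icc_self hx)) (norm_nonneg _)
  intro x hx
  have := norm_le_gronwallBound_of_norm_deriv_right_le (δ := 0)
    (fun y hy => (hv y hy).continuousWithinAt) hright (by simp [ha]) hbound x hx
  rw [gronwallBound_ε0_δ0] at this
  exact norm_le_zero_iff.1 this

/-- The flux `D v' - f v` for the drift `f = -U'`, with derivatives taken within `s` so that
it is meaningful at the boundary of `s`. -/
noncomputable def fokkerPlanckFlux (s : Set ℝ) (D : ℝ) (U v : ℝ → ℝ) (x : ℝ) : ℝ :=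
  D * derivWithin v s x + derivWithin U s x * v x

section FokkerPlanckFlux

variable {s : Set ℝ} {D : ℝ} {U v : ℝ → ℝ}

theorem fokkerPlanckFlux_of_eq_zero {x : ℝ} (h : v x = 0) :
    fokkerPlanckFlux s D U v x = D * derivWithin v s x := by
  simp [fokkerPlanckFlux, h]

theorem contDiffOn_fokkerPlanckFlux {n : ℕ} (hs : UniqueDiffOn ℝ s)
    (hU : ContDiffOn ℝ (n + 1) U s) (hv : ContDiffOn ℝ (n + 1) v s) :
    ContDiffOn ℝ n (fokkerPlanckFlux s D U v) s :=
  (contDiffOn_const.mul (hv.derivWithin hs le_rfl)).add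
    ((hU.derivWithin hs le_rfl).mul (hv.of_le (by norm_cast; omega)))

theorem hasDerivAt_fokkerPlanckFlux {x : ℝ} (hs : UniqueDiffOn ℝ s)
    (hU : ContDiffOn ℝ 2 U s) (hv : ContDiffOn ℝ 2 v s) (hx : s ∈ 𝓝 x) :
    HasDerivAt (fokkerPlanckFlux s D U v)
      (deriv (fun y => D * deriv v y + deriv U y * v y) x) x := by
  have hdiff : DifferentiableAt ℝ (fokkerPlanckFlux s D U v) x :=
    ((contDiffOn_fokkerPlanckFlux (n := 1) hs hU hv).differentiableOn one_ne_zero x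
      (mem_of_mem_nhds hx)).differentiableAt hx
  have heq : fokkerPlanckFlux s D U v =ᶠ[𝓝 x] fun y => D * deriv v y + deriv U y * v y := by
    filter_upwards [eventually_mem_nhds_iff.2 hx] with y hy
    simp only [fokkerPlanckFlux, derivWithin_of_mem_nhds hy]
  exact heq.deriv_eq ▸ hdiff.hasDerivAt

theorem eqOn_zero_of_fokkerPlanckFlux_eq_zero {a b : ℝ} (hab : a < b) (hD : D ≠ 0)
    (hU : ContDiffOn ℝ 1 U (Icc a b)) (hv : ContDiffOn ℝ 1 v (Icc a b)) (hva : v a = 0)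
    (hJ : EqOn (fokkerPlanckFlux (Icc a b) D U v) 0 (Icc a b)) : EqOn v 0 (Icc a b) := by
  have hs := uniqueDiffOn_Icc hab
  refine eqOn_zero_of_hasDerivWithinAt_mul_self
    ((hU.continuousOn_derivWithin hs le_rfl).neg.div_const D) (fun x hx => ?_) hva
  have hvx : derivWithin v (Icc a b) x = -derivWithin U (Icc a b) x / D * v x := by
    have := hJ hx
    simp only [fokkerPlanckFlux, Pi.zero_apply] at this
    field_simp
    linarith
  exact hvx ▸ ((hv.differentiableOn one_ne_zero) x hx).hasDerivWithinAt

theorem fokkerPlanckFlux_left_nonneg {a b : ℝ} (hab : a < b) (hD : 0 ≤ D) (hva : v a = 0)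
    (hpos : ∀ x ∈ Icc a b, 0 ≤ v x) : 0 ≤ fokkerPlanckFlux (Icc a b) D U v a := by
  rw [fokkerPlanckFlux_of_eq_zero hva]
  exact mul_nonneg hD (IsMinOn.derivWithin_Icc_left_nonneg hab fun x hx => hva ▸ hpos x hx)

theorem fokkerPlanckFlux_right_nonpos {a b : ℝ} (hab : a < b) (hD : 0 ≤ D) (hvb : v b = 0)
    (hpos : ∀ x ∈ Icc a b, 0 ≤ v x) : fokkerPlanckFlux (Icc a b) D U v b ≤ 0 := by
  rw [fokkerPlanckFlux_of_eq_zero hvb]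
  exact mul_nonpos_of_nonneg_of_nonpos hD
    (IsMinOn.derivWithin_Icc_right_nonpos hab fun x hx => hvb ▸ hpos x hx)

theorem fokkerPlanckFlux_sub_left_eq_mul_integral {a b γ x : ℝ} {f : ℝ → ℝ} (hab : a < b)
    (hU : ContDiffOn ℝ 2 U (Icc a b)) (hv : ContDiffOn ℝ 2 v (Icc a b))
    (hf : ∀ x, f x = -deriv U x)
    (heig : ∀ x ∈ Ioo a b, γ * v x = deriv (fun y => D * deriv v y - f y * v y) x)
    (hx : x ∈ Icc a b) :
    fokkerPlanckFlux (Icc a b) D U v x - fokkerPlanckFlux (Icc a b) D U v a =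
      γ * ∫ t in a..x, v t := by
  have hs := uniqueDiffOn_Icc hab
  have hdrift : (fun y => D * deriv v y - f y * v y) =
      fun y => D * deriv v y + deriv U y * v y := by
    funext y; rw [hf]; ring
  have hderiv : ∀ y ∈ Ioo a x, HasDerivAt (fokkerPlanckFlux (Icc a b) D U v) (γ * v y) y :=
    fun y hy => by
      rw [heig y ⟨hy.1, hy.2.trans_le hx.2⟩, hdrift]
      exact hasDerivAt_fokkerPlanckFlux hs hU hv (Icc_mem_nhds hy.1 (hy.2.trans_le hx.2))
  rw [← intervalIntegral.integral_const_mul]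
  refine (intervalIntegral.integral_eq_sub_of_hasDerivAt_of_le hx.1 ?_ hderiv ?_).symm
  · exact (contDiffOn_fokkerPlanckFlux (n := 0) hs (hU.of_le one_le_two)
      (hv.of_le one_le_two)).continuousOn.mono (Icc_subset_Icc_right hx.2)
  · exact ((continuousOn_const.mul hv.continuousOn).mono
      (Icc_subset_Icc_right hx.2)).intervalIntegrable_of_Icc hx.1

end FokkerPlanckFlux

/-- For a potential drift `f = −U'`, a nonnegative Dirichlet eigenfunction of
the Fokker-Planck operator on `[a, b]` with positive total mass has strictly
negative eigenvalue `γ < 0`. -/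
theorem fokker_planck_leading_eigenvalue_neg
    (a b D γ : ℝ) (hab : a < b) (hD : 0 < D)
    (U f v : ℝ → ℝ)
    (hU : ContDiffOn ℝ 2 U (Set.Icc a b))
    (hf : ∀ x, f x = -deriv U x)
    (hv : ContDiffOn ℝ 2 v (Set.Icc a b))
    (hva : v a = 0) (hvb : v b = 0)
    (hpos : ∀ x ∈ Set.Icc a b, 0 ≤ v x)
    (hmass : 0 < ∫ x in a..b, v x)
    (heig : ∀ x ∈ Set.Icc a b,
      γ * v x = deriv (fun y => D * deriv v y - f y * v y) x) :
    γ < 0 := by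
  set J := fokkerPlanckFlux (Icc a b) D U v
  have hbalance : ∀ x ∈ Icc a b, J x - J a = γ * ∫ t in a..x, v t := fun x hx =>
    fokkerPlanckFlux_sub_left_eq_mul_integral hab hU hv hf
      (fun y hy => heig y (Ioo_subset_Icc_self hy)) hx
  have hJa : 0 ≤ J a := fokkerPlanckFlux_left_nonneg hab hD.le hva hpos
  have hJb : J b ≤ 0 := fokkerPlanckFlux_right_nonpos hab hD.le hvb hpos
  have hbalance_b := hbalance b (right_mem_Icc.2 hab.le)
  have hγ : γ ≤ 0 := by nlinarith
  refine hγ.lt_of_ne fun hγ0 => hmass.ne' ?_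
  have hJ0 : EqOn J 0 (Icc a b) := fun x hx => by
    have := hbalance x hx
    simp only [hγ0, zero_mul, sub_eq_zero] at this hbalance_b
    simp only [Pi.zero_apply, this]
    linarith
  have hv0 := eqOn_zero_of_fokkerPlanckFlux_eq_zero hab hD.ne' (hU.of_le one_le_two)
    (hv.of_le one_le_two) hva hJ0
  rw [intervalIntegral.integral_congr (g := 0)
    fun x hx => hv0 (by rwa [uIcc_of_le hab.le] at hx)]
  simp
end

section
/- Let λ_max > 0, ε > 0, p₀ ∈ ℝ, define λ(t) = (λ_max / 2) · (tanh(λ_max ε t / 2) + 1) and p̃(t) = p₀ − ε λ_max λ(t) + ε λ(t)². Then p̃(0) = p₀ − ε λ_max² / 4, and p̃(t) ≥ p̃(0) for all t ∈ ℝ (the system is closest to the saddle-node bifurcation at t = 0). Moreover, p̃(0) < 0 if and only if ε > 4 p₀ / λ_max². -/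
/-- The nonlinear drift `p̃(t) = p₀ − ε λ_max λ(t) + ε λ(t)²`, with ramping
parameter `λ(t) = (λ_max/2)(tanh(λ_max ε t/2) + 1)`, attains its minimum
`p̃(0) = p₀ − ε λ_max²/4` at `t = 0`, and `p̃(0) < 0` iff `ε > 4 p₀ / λ_max²`. -/
theorem nonlinear_drift_minimum_at_zero
    (lmax ε p₀ : ℝ) (hlmax : 0 < lmax) (hε : 0 < ε)
    (lam ptilde : ℝ → ℝ)
    (hlam : ∀ t, lam t = lmax / 2 * (Real.tanh (lmax * ε * t / 2) + 1))
    (hptilde : ∀ t, ptilde t = p₀ - ε * lmax * lam t + ε * (lam t) ^ 2) :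
    ptilde 0 = p₀ - ε * lmax ^ 2 / 4 ∧
    (∀ t, ptilde 0 ≤ ptilde t) ∧
    (ptilde 0 < 0 ↔ ε > 4 * p₀ / lmax ^ 2) := by
  have h0 : ptilde 0 = p₀ - ε * lmax ^ 2 / 4 := by
    rw [hptilde, hlam]
    simp [Real.tanh_zero]
    ring
  refine ⟨h0, ?_, ?_⟩
  · intro t
    rw [h0, hptilde, hlam]
    have hsq : 0 ≤ ε * (lmax / 2 * Real.tanh (lmax * ε * t / 2)) ^ 2 :=
      mul_nonneg hε.le (sq_nonneg _)
    nlinarith [hsq]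
  · rw [h0]
    have hl2 : 0 < lmax ^ 2 := by positivity
    rw [gt_iff_lt, div_lt_iff₀ hl2]
    constructor <;> intro h <;> nlinarith
end
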